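/- arXiv:1710.04180 — 3 statements merged into one kernel-verified Lean document; each statement's English description precedes it below -/
import Mathlib

section
/- Let M ∈ SL(3,ℝ) have Plücker coordinates (A1', B1', C1', A2', B2', C2'), and let n = n(x,y,z) be the upper triangular unipotent matrix with first superdiagonal entries x, y and corner entry z. Then the matrix n·M·n⁻¹ has Plücker coordinates (A1', B1' - A1'·x, C1' - B1'·y + A1'·(xy - z), A2', B2' + A2'·y, C2' + B2'·x + A2'·z). -/
/-- Plücker coordinates of a 3×3 matrix. -/
def pA1 {R : Type*} [CommRing R] (M : Matrix (Fin 3) (Fin 3) R) : R := -M 2 0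
def pB1 {R : Type*} [CommRing R] (M : Matrix (Fin 3) (Fin 3) R) : R := -M 2 1
def pC1 {R : Type*} [CommRing R] (M : Matrix (Fin 3) (Fin 3) R) : R := -M 2 2
def pA2 {R : Type*} [CommRing R] (M : Matrix (Fin 3) (Fin 3) R) : R :=
  -(M 1 0 * M 2 1 - M 1 1 * M 2 0)
def pB2 {R : Type*} [CommRing R] (M : Matrix (Fin 3) (Fin 3) R) : R :=
  M 1 0 * M 2 2 - M 1 2 * M 2 0
def pC2 {R : Type*} [CommRing R] (M : Matrix (Fin 3) (Fin 3) R) : R :=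
  -(M 1 1 * M 2 2 - M 1 2 * M 2 1)

/-! The Plücker coordinates are the bottom row and the `2 × 2` minors of the bottom two rows.
Multiplying by `n` on the left only adds a multiple of the last row to the middle one, so it
changes none of them; multiplying by `n⁻¹ = n(-x, -y, xy - z)` on the right is a column
operation, under which they transform linearly. -/

open Matrix

variable {R : Type*} [CommRing R]

def upperUnipotent (x y z : R) : Matrix (Fin 3) (Fin 3) R := !![1, x, z; 0, 1, y; 0, 0, 1]

theorem upperUnipotent_mul_upperUnipotent (x y z x' y' z' : R) :
    upperUnipotent x y z * upperUnipotent x' y' z' =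
      upperUnipotent (x + x') (y + y') (z' + x * y' + z) := by
  ext i j
  fin_cases i <;> fin_cases j <;> simp [upperUnipotent, mul_apply, Fin.sum_univ_three] <;> ring

theorem inv_upperUnipotent (x y z : R) :
    (upperUnipotent x y z)⁻¹ = upperUnipotent (-x) (-y) (x * y - z) := by
  refine inv_eq_right_inv ?_
  rw [upperUnipotent_mul_upperUnipotent, add_neg_cancel, add_neg_cancel,
    show x * y - z + x * -y + z = 0 by ring, upperUnipotent, one_fin_three]

theorem plucker_upperUnipotent_mul (x y z : R) (M : Matrix (Fin 3) (Fin 3) R) :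
    let N := upperUnipotent x y z * M
    pA1 N = pA1 M ∧ pB1 N = pB1 M ∧ pC1 N = pC1 M ∧
      pA2 N = pA2 M ∧ pB2 N = pB2 M ∧ pC2 N = pC2 M := by
  simp only [pA1, pB1, pC1, pA2, pB2, pC2, upperUnipotent, mul_apply, Fin.sum_univ_three,
    of_apply, cons_val', cons_val_zero, cons_val_one, cons_val_two, head_cons, tail_cons,
    empty_val', cons_val_fin_one, head_fin_const]
  refine ⟨?_, ?_, ?_, ?_, ?_, ?_⟩ <;> ring

theorem plucker_mul_upperUnipotent (a b c : R) (M : Matrix (Fin 3) (Fin 3) R) :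
    let N := M * upperUnipotent a b c
    pA1 N = pA1 M ∧
      pB1 N = pB1 M + pA1 M * a ∧
      pC1 N = pC1 M + pB1 M * b + pA1 M * c ∧
      pA2 N = pA2 M ∧
      pB2 N = pB2 M - pA2 M * b ∧
      pC2 N = pC2 M - pB2 M * a + pA2 M * (a * b - c) := by
  simp only [pA1, pB1, pC1, pA2, pB2, pC2, upperUnipotent, mul_apply, Fin.sum_univ_three,
    of_apply, cons_val', cons_val_zero, cons_val_one, cons_val_two, head_cons, tail_cons,
    empty_val', cons_val_fin_one, head_fin_const]
  refine ⟨?_, ?_, ?_, ?_, ?_, ?_⟩ <;> ring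

theorem stmt3_general (x y z : ℝ) (M n N : Matrix (Fin 3) (Fin 3) ℝ)
    (hn : n = !![1, x, z; 0, 1, y; 0, 0, 1])
    (hN : N = n * M * n⁻¹) :
    pA1 N = pA1 M ∧
    pB1 N = pB1 M - pA1 M * x ∧
    pC1 N = pC1 M - pB1 M * y + pA1 M * (x * y - z) ∧
    pA2 N = pA2 M ∧
    pB2 N = pB2 M + pA2 M * y ∧
    pC2 N = pC2 M + pB2 M * x + pA2 M * z := by
  change n = upperUnipotent x y z at hn
  subst hn hN
  rw [inv_upperUnipotent]
  obtain ⟨hA1, hB1, hC1, hA2, hB2, hC2⟩ := plucker_upperUnipotent_mul x y z M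
  obtain ⟨hA1', hB1', hC1', hA2', hB2', hC2'⟩ :=
    plucker_mul_upperUnipotent (-x) (-y) (x * y - z) (upperUnipotent x y z * M)
  rw [hA1', hB1', hC1', hA2', hB2', hC2', hA1, hB1, hC1, hA2, hB2, hC2]
  refine ⟨rfl, by ring, by ring, rfl, by ring, by ring⟩

theorem stmt3 (x y z : ℝ) (M n N : Matrix (Fin 3) (Fin 3) ℝ)
    (hdet : M.det = 1)
    (hn : n = !![1, x, z; 0, 1, y; 0, 0, 1])
    (hN : N = n * M * n⁻¹) :
    pA1 N = pA1 M ∧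
    pB1 N = pB1 M - pA1 M * x ∧
    pC1 N = pC1 M - pB1 M * y + pA1 M * (x * y - z) ∧
    pA2 N = pA2 M ∧
    pB2 N = pB2 M + pA2 M * y ∧
    pC2 N = pC2 M + pB2 M * x + pA2 M * z :=
  stmt3_general x y z M n N hn hN
end

section
/- Let M ∈ Γ₁(4) ⊂ SL(3,ℤ) have Plücker coordinates (4A1, 4B1, C1, 4A2, 4B2, C2) with A1, B1, C1, A2, B2, C2 integers. Suppose D is a positive integer dividing gcd(A1, A2), let D1 = gcd(D, B1) and D2 = D/D1, and suppose D2 divides B2. Then for T = diag(1, D2⁻¹, D⁻¹) (a diagonal matrix over ℚ), the matrix T·M·T⁻¹ has all integer entries, lies in SL(3,ℤ), and has Plücker coordinates (4A1/D, 4B1/D1, C1, 4A2/D, 4B2/D2, C2). -/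
open Matrix

theorem Matrix.dvd_of_dvd_mul_row_of_det_eq_one {n R : Type*} [Fintype n] [DecidableEq n]
    [CommRing R] {M : Matrix n n R} (hdet : M.det = 1) (i : n) {d x : R}
    (h : ∀ j, d ∣ x * M i j) : d ∣ x := by
  have hx : x = ∑ j, x * M i j * adjugate M j i :=
    calc x = x * M.det := by rw [hdet, mul_one]
      _ = _ := by simp only [det_eq_sum_mul_adjugate_row M i, Finset.mul_sum, mul_assoc]
  rw [hx]
  exact Finset.dvd_sum fun j _ => (h j).mul_right _

theorem Matrix.exists_diagonal_mul_eq_mul_diagonal {n R : Type*} [Fintype n] [DecidableEq n]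
    [CommSemiring R] (s : n → R) (M : Matrix n n R) (h : ∀ i j, s i ∣ M i j * s j) :
    ∃ N : Matrix n n R, diagonal s * N = M * diagonal s := by
  choose N hN using h
  exact ⟨of N, by ext i j; simp [hN]⟩

section DiagonalConjugate

variable {n R : Type*} [Fintype n] [DecidableEq n] [CommRing R] {s : n → R}
  {M N : Matrix n n R}

theorem Matrix.mul_apply_eq_of_diagonal_mul_eq_mul_diagonal
    (h : diagonal s * N = M * diagonal s) (i j : n) : s i * N i j = M i j * s j := by
  simpa using congrFun (congrFun h i) j

theorem Matrix.det_eq_of_diagonal_mul_eq_mul_diagonal [IsDomain R] (hs : ∀ i, s i ≠ 0)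
    (h : diagonal s * N = M * diagonal s) : N.det = M.det := by
  have hdet := congrArg det h
  rw [det_mul, det_mul, det_diagonal, mul_comm M.det] at hdet
  exact mul_left_cancel₀ (Finset.prod_ne_zero_iff.mpr fun i _ => hs i) hdet

theorem Matrix.map_eq_inv_mul_mul_of_diagonal_mul_eq_mul_diagonal {K : Type*} [Field K]
    (f : R →+* K) (hs : ∀ i, f (s i) ≠ 0) (h : diagonal s * N = M * diagonal s) :
    N.map f = (diagonal (fun i => f (s i)))⁻¹ * M.map f * diagonal (fun i => f (s i)) := by
  have hf := congrArg (fun A => A.map f) h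
  simp only [Matrix.map_mul, diagonal_map (map_zero f)] at hf
  have hunit : IsUnit (diagonal (fun i => f (s i))).det := by
    rw [det_diagonal, isUnit_iff_ne_zero]
    exact Finset.prod_ne_zero_iff.mpr fun i _ => hs i
  rw [mul_assoc, ← hf]
  exact (nonsing_inv_mul_cancel_left _ _ hunit).symm

end DiagonalConjugate

section Plucker

variable {R : Type*} [CommRing R] {s : Fin 3 → R} {M N : Matrix (Fin 3) (Fin 3) R}

theorem pA1_of_diagonal_mul_eq_mul_diagonal (h : diagonal s * N = M * diagonal s) :
    s 2 * pA1 N = s 0 * pA1 M := by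
  have e := mul_apply_eq_of_diagonal_mul_eq_mul_diagonal h
  simp only [pA1]; linear_combination -e 2 0

theorem pB1_of_diagonal_mul_eq_mul_diagonal (h : diagonal s * N = M * diagonal s) :
    s 2 * pB1 N = s 1 * pB1 M := by
  have e := mul_apply_eq_of_diagonal_mul_eq_mul_diagonal h
  simp only [pB1]; linear_combination -e 2 1

theorem pC1_of_diagonal_mul_eq_mul_diagonal (h : diagonal s * N = M * diagonal s) :
    s 2 * pC1 N = s 2 * pC1 M := by
  have e := mul_apply_eq_of_diagonal_mul_eq_mul_diagonal h
  simp only [pC1]; linear_combination -e 2 2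

theorem pA2_of_diagonal_mul_eq_mul_diagonal (h : diagonal s * N = M * diagonal s) :
    s 1 * s 2 * pA2 N = s 0 * s 1 * pA2 M := by
  have e := mul_apply_eq_of_diagonal_mul_eq_mul_diagonal h
  simp only [pA2]
  linear_combination (-(s 2 * N 2 1)) * e 1 0 - M 1 0 * s 0 * e 2 1 + s 2 * N 2 0 * e 1 1
    + M 1 1 * s 1 * e 2 0

theorem pB2_of_diagonal_mul_eq_mul_diagonal (h : diagonal s * N = M * diagonal s) :
    s 1 * s 2 * pB2 N = s 0 * s 2 * pB2 M := by
  have e := mul_apply_eq_of_diagonal_mul_eq_mul_diagonal h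
  simp only [pB2]
  linear_combination s 2 * N 2 2 * e 1 0 + M 1 0 * s 0 * e 2 2 - s 2 * N 2 0 * e 1 2
    - M 1 2 * s 2 * e 2 0

theorem pC2_of_diagonal_mul_eq_mul_diagonal (h : diagonal s * N = M * diagonal s) :
    s 1 * s 2 * pC2 N = s 1 * s 2 * pC2 M := by
  have e := mul_apply_eq_of_diagonal_mul_eq_mul_diagonal h
  simp only [pC2]
  linear_combination (-(s 2 * N 2 2)) * e 1 1 - M 1 1 * s 1 * e 2 2 + s 2 * N 2 1 * e 1 2
    + M 1 2 * s 2 * e 2 1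

theorem dvd_apply_one_zero_of_dvd_plucker (hdet : M.det = 1) {d : R}
    (hA1 : d ∣ pA1 M) (hA2 : d ∣ pA2 M) (hB2 : d ∣ pB2 M) : d ∣ M 1 0 := by
  have h20 : d ∣ M 2 0 := dvd_neg.mp hA1
  refine dvd_of_dvd_mul_row_of_det_eq_one hdet 2 fun j => ?_
  fin_cases j
  · exact h20.mul_left _
  · have e : M 1 0 * M 2 1 = M 1 1 * M 2 0 - pA2 M := by simp only [pA2]; ring
    simpa [e] using dvd_sub (h20.mul_left _) hA2
  · have e : M 1 0 * M 2 2 = pB2 M + M 1 2 * M 2 0 := by simp only [pB2]; ring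
    simpa [e] using dvd_add hB2 (h20.mul_left _)

theorem exists_diagonal_mul_eq_mul_diagonal_of_dvd_plucker (hdet : M.det = 1)
    {D D1 D2 : R} (hD : D = D1 * D2) (hA1 : D ∣ pA1 M) (hB1 : D1 ∣ pB1 M)
    (hA2 : D2 ∣ pA2 M) (hB2 : D2 ∣ pB2 M) :
    ∃ N : Matrix (Fin 3) (Fin 3) R, diagonal ![1, D2, D] * N = M * diagonal ![1, D2, D] := by
  subst hD
  have h20 : D1 * D2 ∣ M 2 0 := dvd_neg.mp hA1
  have h21 : D1 ∣ M 2 1 := dvd_neg.mp hB1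
  refine exists_diagonal_mul_eq_mul_diagonal _ M fun i j => ?_
  have h10 := dvd_apply_one_zero_of_dvd_plucker hdet (dvd_of_mul_left_dvd hA1) hA2 hB2
  fin_cases i <;> fin_cases j <;>
    simp [h10, h20, mul_dvd_mul h21 dvd_rfl, (dvd_mul_left D2 D1).mul_left]

theorem plucker_scaling_of_diagonal_mul_eq_mul_diagonal [IsDomain R] {D D1 D2 : R}
    (hD : D = D1 * D2) (hD1 : D1 ≠ 0) (hD2 : D2 ≠ 0)
    (h : diagonal ![1, D2, D] * N = M * diagonal ![1, D2, D]) :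
    D * pA1 N = pA1 M ∧ D1 * pB1 N = pB1 M ∧ pC1 N = pC1 M ∧
      D * pA2 N = pA2 M ∧ D2 * pB2 N = pB2 M ∧ pC2 N = pC2 M := by
  subst hD
  have a1 := pA1_of_diagonal_mul_eq_mul_diagonal h
  have b1 := pB1_of_diagonal_mul_eq_mul_diagonal h
  have c1 := pC1_of_diagonal_mul_eq_mul_diagonal h
  have a2 := pA2_of_diagonal_mul_eq_mul_diagonal h
  have b2 := pB2_of_diagonal_mul_eq_mul_diagonal h
  have c2 := pC2_of_diagonal_mul_eq_mul_diagonal h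
  simp only [Matrix.cons_val] at a1 b1 c1 a2 b2 c2
  have hD12 : D1 * D2 ≠ 0 := mul_ne_zero hD1 hD2
  refine ⟨by simpa using a1, mul_left_cancel₀ hD2 (by linear_combination b1),
    mul_left_cancel₀ hD12 c1, mul_left_cancel₀ hD2 (by linear_combination a2),
    mul_left_cancel₀ hD12 (by linear_combination b2),
    mul_left_cancel₀ (mul_ne_zero hD2 hD12) c2⟩

end Plucker

theorem stmt7_general (M : Matrix (Fin 3) (Fin 3) ℤ) (hdet : M.det = 1)
    (A1 B1 C1 A2 B2 C2 D D1 D2 : ℤ)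
    (hp : pA1 M = 4 * A1 ∧ pB1 M = 4 * B1 ∧ pC1 M = C1 ∧
      pA2 M = 4 * A2 ∧ pB2 M = 4 * B2 ∧ pC2 M = C2)
    (hD : 0 < D) (hDdvd : D ∣ (Int.gcd A1 A2 : ℤ))
    (hD1 : D1 = (Int.gcd D B1 : ℤ)) (hD2 : D2 = D / D1) (hD2B2 : D2 ∣ B2)
    (T : Matrix (Fin 3) (Fin 3) ℚ)
    (hT : T = !![1, 0, 0; 0, (D2 : ℚ)⁻¹, 0; 0, 0, (D : ℚ)⁻¹]) :
    ∃ N : Matrix (Fin 3) (Fin 3) ℤ,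
      N.map (Int.cast : ℤ → ℚ) = T * M.map (Int.cast : ℤ → ℚ) * T⁻¹ ∧
      N.det = 1 ∧
      pA1 N = 4 * (A1 / D) ∧ pB1 N = 4 * (B1 / D1) ∧ pC1 N = C1 ∧
      pA2 N = 4 * (A2 / D) ∧ pB2 N = 4 * (B2 / D2) ∧ pC2 N = C2 := by
  obtain ⟨hpA1, hpB1, hpC1, hpA2, hpB2, hpC2⟩ := hp
  have hDA1 : D ∣ A1 := hDdvd.trans (Int.gcd_dvd_left _ _)
  have hDA2 : D ∣ A2 := hDdvd.trans (Int.gcd_dvd_right _ _)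
  have hD1B1 : D1 ∣ B1 := hD1 ▸ Int.gcd_dvd_right _ _
  have hDD : D = D1 * D2 := by rw [hD2, Int.mul_ediv_cancel' (hD1 ▸ Int.gcd_dvd_left _ _)]
  have hD1pos : 0 < D1 := hD1 ▸ Int.natCast_pos.mpr (Int.gcd_pos_of_ne_zero_left B1 hD.ne')
  have hD2pos : 0 < D2 := pos_of_mul_pos_right (hDD ▸ hD) hD1pos.le
  have hD2A2 : D2 ∣ A2 := (Dvd.intro_left D1 hDD.symm).trans hDA2
  obtain ⟨N, hN⟩ := exists_diagonal_mul_eq_mul_diagonal_of_dvd_plucker hdet hDD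
    (hpA1 ▸ hDA1.mul_left 4) (hpB1 ▸ hD1B1.mul_left 4) (hpA2 ▸ hD2A2.mul_left 4)
    (hpB2 ▸ hD2B2.mul_left 4)
  have hs : ∀ i, (![1, D2, D] i : ℤ) ≠ 0 := by
    intro i; fin_cases i <;> simp [hD.ne', hD2pos.ne']
  have hTs : T * diagonal (fun i => ((![1, D2, D] i : ℤ) : ℚ)) = 1 := by
    rw [hT, diagonal_fin_three, mul_fin_three, one_fin_three]
    simp [hD.ne', hD2pos.ne']
  obtain ⟨hA1, hB1, hC1, hA2, hB2, hC2⟩ :=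
    plucker_scaling_of_diagonal_mul_eq_mul_diagonal hDD hD1pos.ne' hD2pos.ne' hN
  refine ⟨N, ?_, (det_eq_of_diagonal_mul_eq_mul_diagonal hs hN).trans hdet, ?_, ?_,
    hC1.trans hpC1, ?_, ?_, hC2.trans hpC2⟩
  · rw [inv_eq_right_inv hTs, ← inv_eq_left_inv hTs]
    exact map_eq_inv_mul_mul_of_diagonal_mul_eq_mul_diagonal (Int.castRingHom ℚ)
      (fun i => Int.cast_ne_zero.mpr (hs i)) hN
  · rw [← Int.mul_ediv_assoc 4 hDA1]
    exact Int.eq_ediv_of_mul_eq_right hD.ne' (hA1.trans hpA1)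
  · rw [← Int.mul_ediv_assoc 4 hD1B1]
    exact Int.eq_ediv_of_mul_eq_right hD1pos.ne' (hB1.trans hpB1)
  · rw [← Int.mul_ediv_assoc 4 hDA2]
    exact Int.eq_ediv_of_mul_eq_right hD.ne' (hA2.trans hpA2)
  · rw [← Int.mul_ediv_assoc 4 hD2B2]
    exact Int.eq_ediv_of_mul_eq_right hD2pos.ne' (hB2.trans hpB2)

theorem stmt7 (M : Matrix (Fin 3) (Fin 3) ℤ) (hdet : M.det = 1)
    (hΓ : M 0 0 ≡ 1 [ZMOD 4] ∧ M 1 1 ≡ 1 [ZMOD 4] ∧ M 2 2 ≡ 1 [ZMOD 4] ∧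
      M 1 0 ≡ 0 [ZMOD 4] ∧ M 2 0 ≡ 0 [ZMOD 4] ∧ M 2 1 ≡ 0 [ZMOD 4])
    (A1 B1 C1 A2 B2 C2 D D1 D2 : ℤ)
    (hp : pA1 M = 4 * A1 ∧ pB1 M = 4 * B1 ∧ pC1 M = C1 ∧
      pA2 M = 4 * A2 ∧ pB2 M = 4 * B2 ∧ pC2 M = C2)
    (hD : 0 < D) (hDdvd : D ∣ (Int.gcd A1 A2 : ℤ))
    (hD1 : D1 = (Int.gcd D B1 : ℤ)) (hD2 : D2 = D / D1) (hD2B2 : D2 ∣ B2)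
    (T : Matrix (Fin 3) (Fin 3) ℚ)
    (hT : T = !![1, 0, 0; 0, (D2 : ℚ)⁻¹, 0; 0, 0, (D : ℚ)⁻¹]) :
    ∃ N : Matrix (Fin 3) (Fin 3) ℤ,
      N.map (Int.cast : ℤ → ℚ) = T * M.map (Int.cast : ℤ → ℚ) * T⁻¹ ∧
      N.det = 1 ∧
      pA1 N = 4 * (A1 / D) ∧ pB1 N = 4 * (B1 / D1) ∧ pC1 N = C1 ∧
      pA2 N = 4 * (A2 / D) ∧ pB2 N = 4 * (B2 / D2) ∧ pC2 N = C2 :=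
  stmt7_general M hdet A1 B1 C1 A2 B2 C2 D D1 D2 hp hD hDdvd hD1 hD2 hD2B2 T hT
end

section
/- Let n be a nonzero integer and a an integer with gcd(a, n) = 1 and a, n odd. Then the Kronecker symbols satisfy (a/n)·(n/a) = H(a,n)·(−1)^(((a−1)/2)·((n−1)/2)), where H(a,n) = −1 if both a < 0 and n < 0, and H(a,n) = 1 otherwise. -/
/-- The Kronecker symbol `(a/2)`: `0` if `a` is even, `1` if `a ≡ ±1 (mod 8)`,
`-1` if `a ≡ ±3 (mod 8)`. -/
def kronTwo (a : ℤ) : ℤ :=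
  if a % 2 = 0 then 0 else if a % 8 = 1 ∨ a % 8 = 7 then 1 else -1

/-- The odd part of a natural number. -/
def oddPart (n : ℕ) : ℕ := n / 2 ^ (n.factorization 2)

/-- The Kronecker symbol `(a/n)` for integers `a`, `n`, extended to all of `ℤ` in the
denominator: multiplicative in `n`, with `(a / minus one)` the sign character,
`(a/2) = kronTwo a`, `(a/0) = 1` iff `a = ±1`, and agreeing with the Jacobi symbol on
positive odd denominators. -/
def kron (a n : ℤ) : ℤ :=
  if n = 0 then (if a = 1 ∨ a = -1 then 1 else 0)
  else (if n < 0 ∧ a < 0 then -1 else 1) * kronTwo a ^ (n.natAbs.factorization 2) *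
    jacobiSym a (oddPart n.natAbs)

/-!
For odd `a`, `n` the 2-part of `kron` is trivial, so `kron a n` is the Jacobi symbol `J(a | |n|)`
twisted by the sign `H(a, n)`, and these twists cancel in `kron a n * kron n a`. Pulling the sign
of `a` out of `J(a | |n|)` costs `χ₄ |n|` when `a < 0`; combined with reciprocity for the positive
odd numbers `|a|`, `|n|`, a case check on residues mod 4 turns these factors into
`H(a, n) · (-1)^((a-1)/2 · (n-1)/2)`.
-/

theorem kron_of_odd (a : ℤ) {n : ℤ} (hn : Odd n) :
    kron a n = (if n < 0 ∧ a < 0 then -1 else 1) * jacobiSym a n.natAbs := by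
  have hn2 := Int.odd_iff.mp hn
  have hfac : n.natAbs.factorization 2 = 0 := Nat.factorization_eq_zero_of_not_dvd (by omega)
  simp [kron, show n ≠ 0 by omega, oddPart, hfac]

theorem jacobiSym_eq_ite_mul_jacobiSym_natAbs (a : ℤ) {b : ℕ} (hb : b % 2 = 1) :
    jacobiSym a b = (if a < 0 ∧ b % 4 = 3 then -1 else 1) * jacobiSym a.natAbs b := by
  rcases lt_or_ge a 0 with ha | ha
  · conv_lhs => rw [show a = -(a.natAbs : ℤ) by omega, jacobiSym.neg _ (Nat.odd_iff.mpr hb),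
      ZMod.χ₄_nat_eq_if_mod_four]
    simp only [ha, true_and]
    split_ifs <;> first | rfl | omega
  · rw [if_neg (by omega), one_mul, Int.natAbs_of_nonneg ha]

theorem neg_one_pow_natAbs_half_mul_half {a n : ℤ} (ha : Odd a) (hn : Odd n) :
    (-1 : ℤ) ^ (((a - 1) / 2) * ((n - 1) / 2)).natAbs =
      if a % 4 = 3 ∧ n % 4 = 3 then -1 else 1 := by
  have ha2 := Int.odd_iff.mp ha
  have hn2 := Int.odd_iff.mp hn
  split_ifs with h
  · apply Odd.neg_one_pow
    rw [Int.natAbs_odd, Int.odd_mul, Int.odd_iff, Int.odd_iff]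
    omega
  · apply Even.neg_one_pow
    rw [Int.natAbs_even, Int.even_mul, Int.even_iff, Int.even_iff]
    omega

theorem jacobiSym_quadratic_reciprocity_int {a n : ℤ} (ha : Odd a) (hn : Odd n)
    (hcop : Int.gcd a n = 1) :
    jacobiSym a n.natAbs * jacobiSym n a.natAbs =
      (if a < 0 ∧ n < 0 then -1 else 1) * (-1) ^ (((a - 1) / 2) * ((n - 1) / 2)).natAbs := by
  set A := a.natAbs
  set N := n.natAbs
  have ha2 := Int.odd_iff.mp ha
  have hn2 := Int.odd_iff.mp hn
  have hA : A % 2 = 1 := by omega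
  have hN : N % 2 = 1 := by omega
  have hsq : jacobiSym N A ^ 2 = 1 := jacobiSym.sq_one (by rw [Int.gcd_comm]; exact hcop)
  rw [jacobiSym_eq_ite_mul_jacobiSym_natAbs a hN, jacobiSym_eq_ite_mul_jacobiSym_natAbs n hA,
    ← jacobiSym.quadratic_reciprocity_if hA hN, neg_one_pow_natAbs_half_mul_half ha hn]
  calc _ = (if a < 0 ∧ N % 4 = 3 then -1 else 1) * (if n < 0 ∧ A % 4 = 3 then -1 else 1) *
        (if A % 4 = 3 ∧ N % 4 = 3 then -1 else 1) * jacobiSym N A ^ 2 := by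
        split_ifs <;> ring
    _ = _ := by
      rw [hsq, mul_one]
      split_ifs <;> omega

theorem stmt19_general (a n : ℤ) (hcop : Int.gcd a n = 1)
    (ha : Odd a) (hnodd : Odd n) :
    kron a n * kron n a =
      (if a < 0 ∧ n < 0 then -1 else 1) *
        (-1) ^ ((((a - 1) / 2) * ((n - 1) / 2)).natAbs) := by
  rw [← jacobiSym_quadratic_reciprocity_int ha hnodd hcop, kron_of_odd a hnodd, kron_of_odd n ha]
  simp only [and_comm (a := n < 0)]
  split_ifs <;> ring

theorem stmt19 (a n : ℤ) (hn : n ≠ 0) (hcop : Int.gcd a n = 1)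
    (ha : Odd a) (hnodd : Odd n) :
    kron a n * kron n a =
      (if a < 0 ∧ n < 0 then -1 else 1) *
        (-1) ^ ((((a - 1) / 2) * ((n - 1) / 2)).natAbs) :=
  stmt19_general a n hcop ha hnodd
end
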